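/- arXiv:0802.1185 — 2 statements merged into one kernel-verified Lean document; each statement's English description precedes it below -/
import Mathlib

section
/- Let 𝔻 be the open unit disc in ℂ and let n ≥ 1 be an integer. Then for all z, ζ ∈ 𝔻, ∫_{|w|>1} (z−w)^{−2} · n (conj(w−ζ))^{n−1} (w−ζ)^{−(n+1)} dA(w) = 0, where dA is planar Lebesgue measure (the integral converges absolutely). -/
open MeasureTheory Metric Set Filter Topology

noncomputable section

/-! In polar coordinates the integral is `∫_{r > 1} 2πr · M(r) dr`, where `M(r)` is the mean of the
integrand over the circle `|w| = r`. On that circle `conj w = r² / w`, so `M(r)` is a contour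
integral of a function that is holomorphic on `|w| ≥ 1` and decays like `|w|⁻²`; pushing the
contour to infinity shows `M(r) = 0`. Absolute convergence follows from the bound
`|integrand| ≤ C |w|⁻⁴` for `|w| ≥ 1`. -/

open Real ComplexConjugate

theorem Complex.polarCoord_symm_eq_circleMap (p : ℝ × ℝ) :
    Complex.polarCoord.symm p = circleMap 0 p.1 p.2 := by
  rw [Complex.polarCoord_symm_apply, circleMap, zero_add, Complex.exp_mul_I]
  push_cast
  ring

section Polar

variable {E : Type*} [NormedAddCommGroup E] [NormedSpace ℝ E] {ρ : ℝ}

theorem polarCoord_target_inter_Ioi_prod (hρ : 0 ≤ ρ) :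
    polarCoord.target ∩ Ioi ρ ×ˢ univ = Ioi ρ ×ˢ Ioo (-π) π := by
  ext ⟨r, θ⟩
  simp only [polarCoord_target, mem_inter_iff, mem_prod, mem_Ioi, mem_univ, and_true]
  exact ⟨fun ⟨⟨_, hθ⟩, hr⟩ => ⟨hr, hθ⟩, fun ⟨hr, hθ⟩ => ⟨⟨hρ.trans_lt hr, hθ⟩, hr⟩⟩

theorem indicator_norm_gt_polarCoord_symm {M : Type*} [Zero M] (f : ℂ → M) {p : ℝ × ℝ}
    (hp : p ∈ polarCoord.target) :
    {w : ℂ | ρ < ‖w‖}.indicator f (Complex.polarCoord.symm p) =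
      (Ioi ρ ×ˢ univ).indicator (fun p : ℝ × ℝ => f (circleMap 0 p.1 p.2)) p := by
  have hnorm : ‖circleMap 0 p.1 p.2‖ = p.1 := by
    rw [norm_circleMap_zero, abs_of_pos hp.1]
  simp only [indicator, mem_ofPred_eq, mem_prod, mem_Ioi, mem_univ, and_true,
    Complex.polarCoord_symm_eq_circleMap, hnorm]

theorem setIntegral_norm_gt_eq_setIntegral_polar (f : ℂ → E) (hρ : 0 ≤ ρ) :
    ∫ w in {w : ℂ | ρ < ‖w‖}, f w =
      ∫ p in Ioi ρ ×ˢ Ioo (-π) π, p.1 • f (circleMap 0 p.1 p.2) := by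
  rw [← integral_indicator (measurableSet_lt measurable_const measurable_norm),
    ← Complex.integral_comp_polarCoord_symm, ← polarCoord_target_inter_Ioi_prod hρ,
    ← setIntegral_indicator (measurableSet_Ioi.prod MeasurableSet.univ)]
  refine setIntegral_congr_fun polarCoord.open_target.measurableSet fun p hp => ?_
  simp only [indicator_norm_gt_polarCoord_symm f hp, indicator_smul_apply]

theorem setLIntegral_norm_gt_eq_setLIntegral_polar (f : ℂ → ENNReal) (hρ : 0 ≤ ρ) :
    ∫⁻ w in {w : ℂ | ρ < ‖w‖}, f w =
      ∫⁻ p in Ioi ρ ×ˢ Ioo (-π) π, ENNReal.ofReal p.1 * f (circleMap 0 p.1 p.2) := by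
  rw [← lintegral_indicator (measurableSet_lt measurable_const measurable_norm),
    ← Complex.lintegral_comp_polarCoord_symm, ← polarCoord_target_inter_Ioi_prod hρ, inter_comm,
    ← setLIntegral_indicator (measurableSet_Ioi.prod MeasurableSet.univ)]
  refine setLIntegral_congr_fun polarCoord.open_target.measurableSet fun p hp => ?_
  simp only [indicator_norm_gt_polarCoord_symm f hp, smul_eq_mul, indicator_mul_right]

theorem integrableOn_norm_gt_of_integrableOn_polar {f : ℂ → E} (hρ : 0 ≤ ρ)
    (hf : AEStronglyMeasurable f (volume.restrict {w : ℂ | ρ < ‖w‖}))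
    (h : IntegrableOn (fun p : ℝ × ℝ => p.1 • f (circleMap 0 p.1 p.2))
      (Ioi ρ ×ˢ Ioo (-π) π)) :
    IntegrableOn f {w : ℂ | ρ < ‖w‖} := by
  refine ⟨hf, ?_⟩
  rw [HasFiniteIntegral, setLIntegral_norm_gt_eq_setLIntegral_polar _ hρ]
  refine lt_of_eq_of_lt (setLIntegral_congr_fun (measurableSet_Ioi.prod measurableSet_Ioo)
    fun p hp => ?_) h.2
  rw [enorm_smul, Real.enorm_of_nonneg (hρ.trans hp.1.out.le)]

theorem integrableOn_polar_of_norm_le {f : ℂ → E} {C : ℝ} {k : ℕ} (hρ : 0 < ρ) (hk : 3 ≤ k)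
    (hf : ContinuousOn f {w : ℂ | ρ < ‖w‖})
    (hbound : ∀ w : ℂ, ρ < ‖w‖ → ‖f w‖ ≤ C / ‖w‖ ^ k) :
    IntegrableOn (fun p : ℝ × ℝ => p.1 • f (circleMap 0 p.1 p.2)) (Ioi ρ ×ˢ Ioo (-π) π) := by
  have hS : MeasurableSet (Ioi ρ ×ˢ Ioo (-π) π) := measurableSet_Ioi.prod measurableSet_Ioo
  have hnorm : ∀ p ∈ Ioi ρ ×ˢ Ioo (-π) π, ‖circleMap 0 p.1 p.2‖ = p.1 := fun p hp => by
    rw [norm_circleMap_zero, abs_of_pos (hρ.trans hp.1)]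
  have hdom : IntegrableOn (fun p : ℝ × ℝ => C * p.1 ^ ((1 : ℝ) - k) * 1)
      (Ioi ρ ×ˢ Ioo (-π) π) := by
    rw [IntegrableOn, Measure.volume_eq_prod, ← Measure.prod_restrict]
    refine Integrable.mul_prod ((integrableOn_Ioi_rpow_of_lt ?_ hρ).const_mul C)
      (integrable_const 1)
    have : (3 : ℝ) ≤ k := by exact_mod_cast hk
    linarith
  refine hdom.mono' ?_ ((ae_restrict_iff' hS).mpr (ae_of_all _ fun p hp => ?_))
  · refine ContinuousOn.aestronglyMeasurable ?_ hS
    refine continuous_fst.continuousOn.smul (hf.comp (by fun_prop) fun p hp => ?_)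
    simp only [mem_ofPred_eq, hnorm p hp]
    exact hp.1
  · have hp0 : 0 < p.1 := hρ.trans hp.1
    have hbd := hbound _ (by rw [hnorm p hp]; exact hp.1)
    rw [hnorm p hp] at hbd
    calc ‖p.1 • f (circleMap 0 p.1 p.2)‖ = p.1 * ‖f (circleMap 0 p.1 p.2)‖ := by
          rw [norm_smul, Real.norm_of_nonneg hp0.le]
      _ ≤ p.1 * (C / p.1 ^ k) := by gcongr
      _ = C * p.1 ^ ((1 : ℝ) - k) * 1 := by
          rw [Real.rpow_sub hp0, Real.rpow_one, Real.rpow_natCast]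
          ring

theorem integral_Ioo_circleMap_eq_circleAverage (f : ℂ → E) (c : ℂ) (R : ℝ) :
    ∫ θ in Ioo (-π) π, f (circleMap c R θ) = (2 * π) • circleAverage f c R := by
  have hper : Function.Periodic (fun θ => f (circleMap c R θ)) (2 * π) :=
    fun θ => congrArg f (periodic_circleMap c R θ)
  have hshift := hper.intervalIntegral_add_eq (-π) 0
  rw [show -π + 2 * π = π by ring, zero_add] at hshift
  rw [← integral_Ioc_eq_integral_Ioo, ← intervalIntegral.integral_of_le (by linarith [pi_pos]),
    hshift, circleAverage_def, smul_inv_smul₀ (by positivity)]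

theorem setIntegral_norm_gt_eq_integral_circleAverage [CompleteSpace E] {f : ℂ → E}
    (hρ : 0 ≤ ρ) (h : IntegrableOn (fun p : ℝ × ℝ => p.1 • f (circleMap 0 p.1 p.2))
      (Ioi ρ ×ˢ Ioo (-π) π)) :
    ∫ w in {w : ℂ | ρ < ‖w‖}, f w = ∫ r in Ioi ρ, (2 * π * r) • circleAverage f 0 r := by
  rw [setIntegral_norm_gt_eq_setIntegral_polar f hρ, Measure.volume_eq_prod,
    setIntegral_prod _ h]
  refine setIntegral_congr_fun measurableSet_Ioi fun r _ => ?_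
  rw [integral_smul, integral_Ioo_circleMap_eq_circleAverage, smul_smul, mul_comm r]

end Polar

theorem circleIntegral_eq_zero_of_norm_le_div_sq {E : Type*} [NormedAddCommGroup E]
    [NormedSpace ℂ E] [CompleteSpace E] {g : ℂ → E} {c : ℂ} {r C : ℝ} (hr : 0 < r)
    (hg : ∀ w, r ≤ ‖w - c‖ → DifferentiableAt ℂ g w)
    (hbound : ∀ w, r ≤ ‖w - c‖ → ‖g w‖ ≤ C / ‖w - c‖ ^ 2) :
    ∮ w in C(c, r), g w = 0 := by
  have hle : ∀ R, r ≤ R → ‖∮ w in C(c, r), g w‖ ≤ 2 * π * C / R := by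
    intro R hrR
    have hR : 0 < R := hr.trans_le hrR
    rw [← Complex.circleIntegral_eq_of_differentiable_on_annulus_off_countable hr hrR
      countable_empty
      (fun w hw => (hg w ?_).continuousAt.continuousWithinAt) fun w hw => hg w ?_]
    · calc ‖∮ w in C(c, R), g w‖ ≤ 2 * π * R * (C / R ^ 2) := by
            refine circleIntegral.norm_integral_le_of_norm_le_const hR.le fun w hw => ?_
            rw [mem_sphere_iff_norm] at hw
            exact hw ▸ hbound w (hw ▸ hrR)
        _ = 2 * π * C / R := by field_simp
    · simpa [dist_eq_norm] using hw.2
    · have := hw.1.2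
      simp only [mem_closedBall, not_le, dist_eq_norm] at this
      exact this.le
  have hlim : Tendsto (fun R : ℝ => 2 * π * C / R) atTop (𝓝 0) :=
    tendsto_const_nhds.div_atTop tendsto_id
  exact norm_le_zero_iff.mp (ge_of_tendsto hlim ((eventually_ge_atTop r).mono hle))

theorem ne_of_norm_lt_of_le_norm {α : Type*} [Norm α] {a b : α} {c : ℝ} (ha : ‖a‖ < c)
    (hb : c ≤ ‖b‖) : b ≠ a := by
  rintro rfl
  linarith

theorem one_sub_norm_mul_norm_le_norm_sub {w z : ℂ} (hw : 1 ≤ ‖w‖) :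
    (1 - ‖z‖) * ‖w‖ ≤ ‖w - z‖ := by
  nlinarith [norm_sub_norm_le w z, norm_nonneg z]

section ExteriorKernel

def exteriorKernel (z ζ : ℂ) (m : ℕ) (w : ℂ) : ℂ :=
  ((z - w) ^ 2)⁻¹ * (conj (w - ζ) ^ m / (w - ζ) ^ (m + 2))

/-- On the circle `‖w‖ = r` this agrees with `w⁻¹ * exteriorKernel z ζ m w`, since there
`conj w = r ^ 2 / w`; unlike the kernel, it is holomorphic on `‖w‖ ≥ 1`. -/
def exteriorKernelOnCircle (z ζ : ℂ) (m : ℕ) (r : ℝ) (w : ℂ) : ℂ :=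
  w⁻¹ * (((z - w) ^ 2)⁻¹ * (((r : ℂ) ^ 2 / w - conj ζ) ^ m / (w - ζ) ^ (m + 2)))

variable {z ζ : ℂ} {m : ℕ}

theorem continuousAt_exteriorKernel {w : ℂ} (hwz : w ≠ z) (hwζ : w ≠ ζ) :
    ContinuousAt (exteriorKernel z ζ m) w := by
  have h₁ : (z - w) ^ 2 ≠ 0 := pow_ne_zero _ (sub_ne_zero.mpr hwz.symm)
  have h₂ : (w - ζ) ^ (m + 2) ≠ 0 := pow_ne_zero _ (sub_ne_zero.mpr hwζ)
  have : Continuous (conj : ℂ → ℂ) := Complex.continuous_conj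
  unfold exteriorKernel
  fun_prop (disch := assumption)

theorem norm_exteriorKernel_le (hz : ‖z‖ < 1) (hζ : ‖ζ‖ < 1) {w : ℂ} (hw : 1 ≤ ‖w‖) :
    ‖exteriorKernel z ζ m w‖ ≤ ((1 - ‖z‖) ^ 2 * (1 - ‖ζ‖) ^ 2)⁻¹ / ‖w‖ ^ 4 := by
  have hz' : 0 < 1 - ‖z‖ := by linarith
  have hζ' : 0 < 1 - ‖ζ‖ := by linarith
  have hwz := one_sub_norm_mul_norm_le_norm_sub (z := z) hw
  have hwζ := one_sub_norm_mul_norm_le_norm_sub (z := ζ) hw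
  have hwζ₀ : 0 < ‖w - ζ‖ := lt_of_lt_of_le (by positivity) hwζ
  have hnorm : ‖exteriorKernel z ζ m w‖ = (‖w - z‖ ^ 2 * ‖w - ζ‖ ^ 2)⁻¹ := by
    simp only [exteriorKernel, norm_mul, norm_div, norm_inv, norm_pow, RCLike.norm_conj,
      norm_sub_rev z]
    field_simp
    rw [pow_add]
  calc ‖exteriorKernel z ζ m w‖ = (‖w - z‖ ^ 2 * ‖w - ζ‖ ^ 2)⁻¹ := hnorm
    _ ≤ (((1 - ‖z‖) * ‖w‖) ^ 2 * ((1 - ‖ζ‖) * ‖w‖) ^ 2)⁻¹ := by gcongr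
    _ = ((1 - ‖z‖) ^ 2 * (1 - ‖ζ‖) ^ 2)⁻¹ / ‖w‖ ^ 4 := by field_simp

theorem differentiableAt_exteriorKernelOnCircle (r : ℝ) {w : ℂ} (hw₀ : w ≠ 0) (hwz : w ≠ z)
    (hwζ : w ≠ ζ) : DifferentiableAt ℂ (exteriorKernelOnCircle z ζ m r) w := by
  have h₁ : (z - w) ^ 2 ≠ 0 := pow_ne_zero _ (sub_ne_zero.mpr hwz.symm)
  have h₂ : (w - ζ) ^ (m + 2) ≠ 0 := pow_ne_zero _ (sub_ne_zero.mpr hwζ)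
  unfold exteriorKernelOnCircle
  fun_prop (disch := assumption)

theorem norm_exteriorKernelOnCircle_le (hz : ‖z‖ < 1) (hζ : ‖ζ‖ < 1) {r : ℝ} (hr : 1 ≤ r)
    {w : ℂ} (hw : r ≤ ‖w‖) :
    ‖exteriorKernelOnCircle z ζ m r w‖ ≤
      (r + 1) ^ m / ((1 - ‖z‖) ^ 2 * (1 - ‖ζ‖) ^ (m + 2)) / ‖w‖ ^ 2 := by
  have hw1 : 1 ≤ ‖w‖ := hr.trans hw
  have hz' : 0 < 1 - ‖z‖ := by linarith
  have hζ' : 0 < 1 - ‖ζ‖ := by linarith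
  have hwz := one_sub_norm_mul_norm_le_norm_sub (z := z) hw1
  have hwζ : 1 - ‖ζ‖ ≤ ‖w - ζ‖ := by
    nlinarith [one_sub_norm_mul_norm_le_norm_sub (z := ζ) hw1]
  have hnum : ‖(r : ℂ) ^ 2 / w - conj ζ‖ ≤ r + 1 :=
    calc ‖(r : ℂ) ^ 2 / w - conj ζ‖ ≤ r ^ 2 / ‖w‖ + ‖ζ‖ := by
          refine (norm_sub_le _ _).trans_eq ?_
          rw [norm_div, norm_pow, Complex.norm_real, Real.norm_eq_abs, sq_abs, RCLike.norm_conj]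
      _ ≤ r + 1 := by
          gcongr
          rw [div_le_iff₀ (by positivity)]
          nlinarith
  have hnorm : ‖exteriorKernelOnCircle z ζ m r w‖ =
      ‖(r : ℂ) ^ 2 / w - conj ζ‖ ^ m / (‖w‖ * ‖w - z‖ ^ 2 * ‖w - ζ‖ ^ (m + 2)) := by
    simp only [exteriorKernelOnCircle, norm_mul, norm_div, norm_inv, norm_pow, norm_sub_rev z]
    ring
  calc ‖exteriorKernelOnCircle z ζ m r w‖
      = ‖(r : ℂ) ^ 2 / w - conj ζ‖ ^ m / (‖w‖ * ‖w - z‖ ^ 2 * ‖w - ζ‖ ^ (m + 2)) := hnorm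
    _ ≤ (r + 1) ^ m / (1 * ((1 - ‖z‖) * ‖w‖) ^ 2 * (1 - ‖ζ‖) ^ (m + 2)) := by gcongr
    _ = (r + 1) ^ m / ((1 - ‖z‖) ^ 2 * (1 - ‖ζ‖) ^ (m + 2)) / ‖w‖ ^ 2 := by
      rw [one_mul, mul_pow, div_div]
      ring

theorem smul_exteriorKernel_eqOn_sphere (r : ℝ) :
    EqOn (fun w => (w - 0)⁻¹ • exteriorKernel z ζ m w) (exteriorKernelOnCircle z ζ m r)
      (sphere 0 r) := by
  intro w hw
  have hconj : conj w = (r : ℂ) ^ 2 / w := by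
    rcases eq_or_ne w 0 with rfl | hw₀
    · simp
    rw [eq_div_iff hw₀, mul_comm, Complex.mul_conj', mem_sphere_zero_iff_norm.mp hw]
  simp only [exteriorKernel, exteriorKernelOnCircle, sub_zero, smul_eq_mul, map_sub, hconj]

theorem circleAverage_exteriorKernel_eq_zero (hz : ‖z‖ < 1) (hζ : ‖ζ‖ < 1) {r : ℝ}
    (hr : 1 < r) : circleAverage (exteriorKernel z ζ m) 0 r = 0 := by
  rw [circleAverage_eq_circleIntegral (by positivity),
    circleIntegral.integral_congr (by positivity) (smul_exteriorKernel_eqOn_sphere r)]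
  refine smul_eq_zero_of_right _ (circleIntegral_eq_zero_of_norm_le_div_sq
    (C := (r + 1) ^ m / ((1 - ‖z‖) ^ 2 * (1 - ‖ζ‖) ^ (m + 2))) (by positivity)
    (fun w hw => ?_) fun w hw => ?_)
  · rw [sub_zero] at hw
    have hw1 : 1 ≤ ‖w‖ := hr.le.trans hw
    exact differentiableAt_exteriorKernelOnCircle r
      (ne_of_norm_lt_of_le_norm (norm_zero.trans_lt one_pos) hw1)
      (ne_of_norm_lt_of_le_norm hz hw1) (ne_of_norm_lt_of_le_norm hζ hw1)
  · rw [sub_zero] at hw ⊢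
    exact norm_exteriorKernelOnCircle_le hz hζ hr.le hw

end ExteriorKernel

/-- For the unit disc `𝔻` and `n ≥ 1`: for all `z, ζ ∈ 𝔻`, the integral
`∫_{|w|>1} (z−w)^{−2} · n conj(w−ζ)^{n−1} (w−ζ)^{−(n+1)} dA(w)` converges absolutely
and equals `0`. -/
theorem statement13 (n : ℕ) (hn : 1 ≤ n)
    (z ζ : ℂ) (hz : z ∈ ball (0 : ℂ) 1) (hζ : ζ ∈ ball (0 : ℂ) 1) :
    IntegrableOn
      (fun w : ℂ =>
        ((z - w) ^ 2)⁻¹ * ((n : ℂ) * (starRingEnd ℂ) (w - ζ) ^ (n - 1) / (w - ζ) ^ (n + 1)))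
      {w : ℂ | 1 < ‖w‖} ∧
    (∫ w in {w : ℂ | 1 < ‖w‖},
        ((z - w) ^ 2)⁻¹ *
          ((n : ℂ) * (starRingEnd ℂ) (w - ζ) ^ (n - 1) / (w - ζ) ^ (n + 1))) = 0 := by
  obtain ⟨m, rfl⟩ : ∃ m, n = m + 1 := ⟨n - 1, by omega⟩
  rw [mem_ball_zero_iff] at hz hζ
  have hfun : (fun w : ℂ => ((z - w) ^ 2)⁻¹ *
      (((m + 1 : ℕ) : ℂ) * conj (w - ζ) ^ (m + 1 - 1) / (w - ζ) ^ (m + 1 + 1))) =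
      fun w => ((m + 1 : ℕ) : ℂ) * exteriorKernel z ζ m w := by
    ext w
    simp only [exteriorKernel, Nat.add_sub_cancel, add_assoc, one_add_one_eq_two]
    ring
  have hcont : ContinuousOn (exteriorKernel z ζ m) {w : ℂ | 1 < ‖w‖} := fun w hw =>
    (continuousAt_exteriorKernel (ne_of_norm_lt_of_le_norm hz hw.out.le)
      (ne_of_norm_lt_of_le_norm hζ hw.out.le)).continuousWithinAt
  have hpolar := integrableOn_polar_of_norm_le zero_lt_one (by norm_num) hcont
    fun w hw => norm_exteriorKernel_le hz hζ hw.le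
  have hmeas : AEStronglyMeasurable (exteriorKernel z ζ m) (volume.restrict {w : ℂ | 1 < ‖w‖}) :=
    hcont.aestronglyMeasurable (measurableSet_lt measurable_const measurable_norm)
  rw [hfun, integral_const_mul,
    setIntegral_norm_gt_eq_integral_circleAverage zero_le_one hpolar,
    setIntegral_congr_fun measurableSet_Ioi fun r hr => by
      rw [circleAverage_exteriorKernel_eq_zero hz hζ hr, smul_zero]]
  exact ⟨(integrableOn_norm_gt_of_integrableOn_polar zero_le_one hmeas hpolar).const_mul _,
    by simp⟩

end
end

section
/- Let f : ℝ^d → ℝ be m times continuously differentiable, and for a ∈ ℝ^d let T_m(f,a)(x) = Σ_{|α|≤m} (∂^α f(a)/α!) (x−a)^α denote its Taylor polynomial of degree m around a (sum over multi-indices α of ℝ^d with |α| ≤ m). Then for all a₁, a₂, x ∈ ℝ^d: T_m(f,a₁)(x) − T_m(f,a₂)(x) = Σ_{|α|≤m} (1/α!) [T_{m−|α|}(∂^α f, a₁)(a₂) − ∂^α f(a₂)] (x−a₂)^α. -/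
/-!
Write `x - a₁ = (x - a₂) + (a₂ - a₁)`. Expanding every `(x - a₁)^γ / γ!` by the multinomial
theorem and collecting terms by the power of `x - a₂` turns `T_m(f,a₁)(x)` into
`Σ_{|α|≤m} (x - a₂)^α / α! · T_{m-|α|}(∂^α f, a₁)(a₂)`, where the coefficient `∂^{α+β} f(a₁)`
is read as `∂^β ∂^α f(a₁)`. This is legitimate for `|α| + |β| ≤ m` because the partial
derivatives of a `C^m` function commute up to order `m` (symmetry of the second derivative).
Since `∂^α f(a₂) (x - a₂)^α / α!` is the `α`-th term of `T_m(f,a₂)(x)`, subtracting gives the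
identity.
-/

noncomputable section

/-- The partial derivative of `f : ℝ^d → ℝ` in the `i`-th coordinate direction. -/
def partialDeriv {d : ℕ} (i : Fin d) (f : (Fin d → ℝ) → ℝ) : (Fin d → ℝ) → ℝ :=
  fun x => deriv (fun t => f (Function.update x i t)) (x i)

/-- The iterated partial derivative `∂^α f` for a multi-index `α`. -/
def multiDeriv {d : ℕ} (α : Fin d → ℕ) (f : (Fin d → ℝ) → ℝ) : (Fin d → ℝ) → ℝ :=
  ((List.ofFn fun i : Fin d => (partialDeriv i)^[α i]).foldr (· ∘ ·) id) f

/-- The Taylor polynomial `T_m(f,a)(x) = Σ_{|α|≤m} (∂^α f(a)/α!) (x−a)^α`,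
the sum running over all multi-indices `α` with `|α| ≤ m` (each component of such a
multi-index is at most `m`, so they are encoded as functions `Fin d → Fin (m+1)`). -/
def taylorPoly {d : ℕ} (m : ℕ) (f : (Fin d → ℝ) → ℝ) (a x : Fin d → ℝ) : ℝ :=
  ∑ α : Fin d → Fin (m + 1),
    if (∑ i, (α i : ℕ)) ≤ m then
      multiDeriv (fun i => (α i : ℕ)) f a / (∏ i, ((α i : ℕ).factorial : ℝ)) *
        ∏ i, (x i - a i) ^ (α i : ℕ)
    else 0

open Finset

section MultiIndex

variable {ι K : Type*} [Fintype ι] [Field K]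

variable (ι) in
def multiIndices [DecidableEq ι] (m : ℕ) : Finset (ι → ℕ) :=
  {γ ∈ Iic fun _ => m | ∑ i, γ i ≤ m}

theorem mem_multiIndices [DecidableEq ι] {m : ℕ} {γ : ι → ℕ} :
    γ ∈ multiIndices ι m ↔ ∑ i, γ i ≤ m := by
  simp only [multiIndices, mem_filter, mem_Iic, and_iff_right_iff_imp]
  exact fun h i => (single_le_sum (fun j _ => Nat.zero_le (γ j)) (mem_univ i)).trans h

theorem sum_fin_ite_eq_sum_multiIndices [DecidableEq ι] {M : Type*} [AddCommMonoid M] (m : ℕ)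
    (F : (ι → ℕ) → M) :
    (∑ α : ι → Fin (m + 1), if ∑ i, (α i : ℕ) ≤ m then F (fun i => α i) else 0) =
      ∑ γ ∈ multiIndices ι m, F γ := by
  rw [← sum_filter]
  refine sum_nbij (fun α i => α i) ?_ ?_ ?_ (fun _ _ => rfl)
  · intro α hα
    simpa [mem_multiIndices] using hα
  · intro α _ β _ h
    funext i
    exact Fin.ext (congr_fun h i)
  · intro γ hγ
    have hle : ∀ i, γ i < m + 1 := fun i => Nat.lt_succ_of_le (mem_Iic.1 (mem_filter.1 hγ).1 i)
    exact ⟨fun i => ⟨γ i, hle i⟩, by simpa using mem_multiIndices.1 hγ, rfl⟩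

-- `u ^ γ / γ!` in multi-index notation
def dividedMonomial (γ : ι → ℕ) (u : ι → K) : K :=
  ∏ i, u i ^ γ i / (γ i).factorial

theorem dividedMonomial_eq_div (γ : ι → ℕ) (u : ι → K) :
    dividedMonomial γ u = (∏ i, u i ^ γ i) / ∏ i, ((γ i).factorial : K) :=
  prod_div_distrib ..

theorem add_pow_div_factorial [CharZero K] (a b : K) (n : ℕ) :
    (a + b) ^ n / n.factorial =
      ∑ k ∈ range (n + 1), a ^ k / k.factorial * (b ^ (n - k) / (n - k).factorial) := by
  rw [add_pow, sum_div]
  refine sum_congr rfl fun k hk => ?_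
  rw [Nat.cast_choose K (Nat.lt_succ_iff.1 (mem_range.1 hk))]
  have := n.factorial_ne_zero
  have := k.factorial_ne_zero
  have := (n - k).factorial_ne_zero
  field_simp

theorem dividedMonomial_add [DecidableEq ι] [CharZero K] (γ : ι → ℕ) (u v : ι → K) :
    dividedMonomial γ (u + v) =
      ∑ κ ∈ Iic γ, dividedMonomial κ u * dividedMonomial (γ - κ) v := by
  have hbox : Fintype.piFinset (fun i => range (γ i + 1)) = Iic γ := by
    ext κ; simp [Pi.le_def]
  simp only [dividedMonomial, Pi.add_apply, Pi.sub_apply, add_pow_div_factorial, prod_univ_sum,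
    hbox, prod_mul_distrib]

theorem sum_mul_dividedMonomial_add [DecidableEq ι] [CharZero K] (m : ℕ) (D : (ι → ℕ) → K)
    (u v : ι → K) :
    ∑ γ ∈ multiIndices ι m, D γ * dividedMonomial γ (u + v) =
      ∑ α ∈ multiIndices ι m, dividedMonomial α u *
        ∑ β ∈ multiIndices ι (m - ∑ i, α i), D (α + β) * dividedMonomial β v := by
  calc ∑ γ ∈ multiIndices ι m, D γ * dividedMonomial γ (u + v)
      = ∑ γ ∈ multiIndices ι m, ∑ κ ∈ Iic γ,
          D γ * (dividedMonomial κ u * dividedMonomial (γ - κ) v) := by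
        simp_rw [dividedMonomial_add, mul_sum]
    _ = ∑ κ ∈ multiIndices ι m, ∑ γ ∈ multiIndices ι m with ∀ i, κ i ≤ γ i,
          D γ * (dividedMonomial κ u * dividedMonomial (γ - κ) v) := by
        refine sum_comm' fun γ κ => ?_
        simp only [mem_filter, mem_Iic, mem_multiIndices, Pi.le_def]
        exact ⟨fun ⟨hγ, hκ⟩ => ⟨⟨hγ, hκ⟩, (sum_le_sum fun i _ => hκ i).trans hγ⟩,
          fun ⟨⟨hγ, hκ⟩, _⟩ => ⟨hγ, hκ⟩⟩
    _ = _ := by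
        refine sum_congr rfl fun α hα => ?_
        have hα' := mem_multiIndices.1 hα
        rw [mul_sum]
        refine sum_nbij' (· - α) (α + ·) ?_ ?_ ?_ ?_ ?_
        · intro γ hγ
          simp only [mem_filter, mem_multiIndices] at hγ ⊢
          rw [Pi.sub_def, sum_tsub_distrib _ fun i _ => hγ.2 i]
          omega
        · intro β hβ
          simp only [mem_filter, mem_multiIndices, Pi.add_apply, sum_add_distrib] at hβ ⊢
          exact ⟨by omega, fun i => Nat.le_add_right _ _⟩
        · intro γ hγ
          exact add_tsub_cancel_of_le fun i => (mem_filter.1 hγ).2 i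
        · intro β _
          exact add_tsub_cancel_left α β
        · intro γ hγ
          rw [add_tsub_cancel_of_le fun i => (mem_filter.1 hγ).2 i]
          ring

end MultiIndex

section PartialDeriv

variable {d : ℕ}

theorem partialDeriv_apply_eq_fderiv (i : Fin d) {f : (Fin d → ℝ) → ℝ} {x : Fin d → ℝ}
    (hf : DifferentiableAt ℝ f x) : partialDeriv i f x = fderiv ℝ f x (Pi.single i 1) := by
  have hf' : HasFDerivAt f (fderiv ℝ f x) (Function.update x i (x i)) := by
    simpa using hf.hasFDerivAt
  exact (hf'.comp_hasDerivAt (x i) (hasDerivAt_update x i (x i))).deriv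

theorem partialDeriv_eq_fderiv (i : Fin d) {f : (Fin d → ℝ) → ℝ}
    (hf : Differentiable ℝ f) : partialDeriv i f = fun x => fderiv ℝ f x (Pi.single i 1) :=
  funext fun x => partialDeriv_apply_eq_fderiv i (hf x)

theorem ContDiff.partialDeriv {n : ℕ} (i : Fin d) {f : (Fin d → ℝ) → ℝ}
    (hf : ContDiff ℝ (n + 1) f) : ContDiff ℝ n (partialDeriv i f) := by
  rw [partialDeriv_eq_fderiv i (hf.differentiable (by simp))]
  exact (hf.fderiv_right le_rfl).clm_apply contDiff_const

theorem partialDeriv_comm (i j : Fin d) {f : (Fin d → ℝ) → ℝ} (hf : ContDiff ℝ 2 f) :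
    partialDeriv i (partialDeriv j f) = partialDeriv j (partialDeriv i f) := by
  have hf' : Differentiable ℝ (fderiv ℝ f) :=
    (hf.fderiv_right (m := 1) (by norm_num)).differentiable (by simp)
  have hsecond : ∀ u v : Fin d, partialDeriv u (partialDeriv v f) =
      fun x => fderiv ℝ (fderiv ℝ f) x (Pi.single u 1) (Pi.single v 1) := by
    intro u v
    funext x
    rw [partialDeriv_eq_fderiv v (hf.differentiable (by simp)),
      partialDeriv_apply_eq_fderiv u ((hf' x).clm_apply (differentiableAt_const _)),
      fderiv_clm_apply (hf' x) (differentiableAt_const _)]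
    simp
  rw [hsecond, hsecond]
  funext x
  exact hf.contDiffAt.isSymmSndFDerivAt (by simp [minSmoothness_of_isRCLikeNormedField]) _ _

def iterPartialDeriv (L : List (Fin d)) (f : (Fin d → ℝ) → ℝ) : (Fin d → ℝ) → ℝ :=
  L.foldr partialDeriv f

@[simp]
theorem iterPartialDeriv_cons (i : Fin d) (L : List (Fin d)) (f : (Fin d → ℝ) → ℝ) :
    iterPartialDeriv (i :: L) f = partialDeriv i (iterPartialDeriv L f) := rfl

theorem iterPartialDeriv_append (L₁ L₂ : List (Fin d)) (f : (Fin d → ℝ) → ℝ) :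
    iterPartialDeriv (L₁ ++ L₂) f = iterPartialDeriv L₁ (iterPartialDeriv L₂ f) :=
  List.foldr_append ..

theorem iterPartialDeriv_replicate (k : ℕ) (i : Fin d) :
    iterPartialDeriv (List.replicate k i) = (partialDeriv i)^[k] := by
  funext f
  induction k with
  | zero => rfl
  | succ k ih => rw [List.replicate_succ, iterPartialDeriv_cons, ih, Function.iterate_succ_apply']

theorem iterPartialDeriv_flatten (Ls : List (List (Fin d))) (f : (Fin d → ℝ) → ℝ) :
    iterPartialDeriv Ls.flatten f = (Ls.map iterPartialDeriv).foldr (· ∘ ·) id f := by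
  induction Ls with
  | nil => rfl
  | cons L Ls ih => simp [iterPartialDeriv_append, ih]

theorem ContDiff.iterPartialDeriv {n : ℕ} (L : List (Fin d)) {f : (Fin d → ℝ) → ℝ}
    (hf : ContDiff ℝ (n + L.length : ℕ) f) : ContDiff ℝ n (iterPartialDeriv L f) := by
  induction L generalizing n with
  | nil => exact hf
  | cons i L ih =>
    refine (ih (n := n + 1) ?_).partialDeriv i
    rwa [show n + 1 + L.length = n + (i :: L).length by simp; omega]

theorem iterPartialDeriv_perm {L₁ L₂ : List (Fin d)} {f : (Fin d → ℝ) → ℝ}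
    (hf : ContDiff ℝ L₁.length f) (h : L₁.Perm L₂) :
    iterPartialDeriv L₁ f = iterPartialDeriv L₂ f := by
  induction h with
  | nil => rfl
  | cons i _ ih =>
    rw [iterPartialDeriv_cons, iterPartialDeriv_cons, ih (hf.of_le (by simp))]
  | swap i j L =>
    have hL : ContDiff ℝ (2 + L.length : ℕ) f := by
      rwa [show 2 + L.length = (j :: i :: L).length by simp; omega]
    exact partialDeriv_comm j i (hL.iterPartialDeriv L)
  | trans h₁₂ _ ih₁₂ ih₂₃ => rw [ih₁₂ hf, ih₂₃ (h₁₂.length_eq ▸ hf)]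

def multiIndexList (α : Fin d → ℕ) : List (Fin d) :=
  (List.ofFn fun i => List.replicate (α i) i).flatten

theorem count_multiIndexList (α : Fin d → ℕ) (j : Fin d) :
    (multiIndexList α).count j = α j := by
  simp [multiIndexList, List.count_flatten, List.map_ofFn, List.sum_ofFn, List.count_replicate]

theorem length_multiIndexList (α : Fin d → ℕ) : (multiIndexList α).length = ∑ i, α i := by
  simp [multiIndexList, List.length_flatten, List.map_ofFn, List.sum_ofFn]

theorem multiDeriv_eq_iterPartialDeriv (α : Fin d → ℕ) (f : (Fin d → ℝ) → ℝ) :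
    multiDeriv α f = iterPartialDeriv (multiIndexList α) f := by
  simp [multiDeriv, multiIndexList, iterPartialDeriv_flatten, List.map_ofFn, Function.comp_def,
    iterPartialDeriv_replicate]

theorem multiDeriv_multiDeriv {n : ℕ} {f : (Fin d → ℝ) → ℝ} (hf : ContDiff ℝ n f)
    (α β : Fin d → ℕ) (h : ∑ i, α i + ∑ i, β i ≤ n) :
    multiDeriv β (multiDeriv α f) = multiDeriv (α + β) f := by
  simp only [multiDeriv_eq_iterPartialDeriv, ← iterPartialDeriv_append]
  refine iterPartialDeriv_perm (hf.of_le ?_) (List.perm_iff_count.2 fun j => ?_)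
  · rw [List.length_append, length_multiIndexList, length_multiIndexList]
    exact_mod_cast (by omega : ∑ i, β i + ∑ i, α i ≤ n)
  · simp [List.count_append, count_multiIndexList, add_comm]

end PartialDeriv

section Taylor

variable {d : ℕ}

theorem taylorPoly_eq_sum (m : ℕ) (f : (Fin d → ℝ) → ℝ) (a x : Fin d → ℝ) :
    taylorPoly m f a x =
      ∑ γ ∈ multiIndices (Fin d) m, multiDeriv γ f a * dividedMonomial γ (x - a) := by
  refine (sum_fin_ite_eq_sum_multiIndices m fun γ =>
    multiDeriv γ f a / (∏ i, ((γ i).factorial : ℝ)) * ∏ i, (x i - a i) ^ γ i).trans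
      (sum_congr rfl fun γ _ => ?_)
  rw [dividedMonomial_eq_div]
  simp only [Pi.sub_apply]
  ring

theorem taylorPoly_eq_sum_taylorPoly_multiDeriv {m : ℕ} {f : (Fin d → ℝ) → ℝ}
    (hf : ContDiff ℝ m f) (a₁ a₂ x : Fin d → ℝ) :
    taylorPoly m f a₁ x = ∑ α ∈ multiIndices (Fin d) m,
      dividedMonomial α (x - a₂) * taylorPoly (m - ∑ i, α i) (multiDeriv α f) a₁ a₂ := by
  rw [taylorPoly_eq_sum, ← sub_add_sub_cancel x a₂ a₁, sum_mul_dividedMonomial_add]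
  refine sum_congr rfl fun α hα => ?_
  rw [taylorPoly_eq_sum]
  refine congrArg _ (sum_congr rfl fun β hβ => ?_)
  have hα' := mem_multiIndices.1 hα
  have hβ' := mem_multiIndices.1 hβ
  rw [multiDeriv_multiDeriv hf α β (by omega)]

end Taylor

/-- For `f : ℝ^d → ℝ` of class `C^m` and all `a₁, a₂, x ∈ ℝ^d`:
`T_m(f,a₁)(x) − T_m(f,a₂)(x)
  = Σ_{|α|≤m} (1/α!) [T_{m−|α|}(∂^α f, a₁)(a₂) − ∂^α f(a₂)] (x−a₂)^α`. -/
theorem statement15 {d : ℕ} (m : ℕ) (f : (Fin d → ℝ) → ℝ) (hf : ContDiff ℝ m f)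
    (a₁ a₂ x : Fin d → ℝ) :
    taylorPoly m f a₁ x - taylorPoly m f a₂ x =
      ∑ α : Fin d → Fin (m + 1),
        if (∑ i, (α i : ℕ)) ≤ m then
          (1 / ∏ i, ((α i : ℕ).factorial : ℝ)) *
            (taylorPoly (m - ∑ i, (α i : ℕ)) (multiDeriv (fun i => (α i : ℕ)) f) a₁ a₂ -
              multiDeriv (fun i => (α i : ℕ)) f a₂) *
            ∏ i, (x i - a₂ i) ^ (α i : ℕ)
        else 0 := by
  rw [taylorPoly_eq_sum_taylorPoly_multiDeriv hf a₁ a₂ x, taylorPoly_eq_sum m f a₂ x,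
    ← sum_sub_distrib]
  refine ((sum_fin_ite_eq_sum_multiIndices m fun α =>
    (1 / ∏ i, ((α i).factorial : ℝ)) *
      (taylorPoly (m - ∑ i, α i) (multiDeriv α f) a₁ a₂ - multiDeriv α f a₂) *
      ∏ i, (x i - a₂ i) ^ α i).trans (sum_congr rfl fun α _ => ?_)).symm
  rw [dividedMonomial_eq_div]
  simp only [Pi.sub_apply]
  ring

end
end
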